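/- arXiv:1409.2948 — 4 statements merged into one kernel-verified Lean document; each statement's English description precedes it below -/
import Mathlib

section
/- Let A = (A_i, d_i) and B = (B_i, d'_i) be cochain complexes concentrated in nonnegative degrees in an additive category, such that for all i ≥ 0 the morphism d_{i+1} is a weak cokernel of d_i. If f, g : A → B are morphisms of complexes with f_0 = g_0, then there exists a chain homotopy h between f and g with h_0 = 0. -/
open CategoryTheory Limits

universe v u

variable {C : Type u} [Category.{v} C]

section Defs
variable [Preadditive C]

/-- `g` is a weak cokernel of `f`: `g ∘ f = 0` and every morphism killing `f`
factors (not necessarily uniquely) through `g`. -/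
def IsWeakCokernel {A B X : C} (f : A ⟶ B) (g : B ⟶ X) : Prop :=
  f ≫ g = 0 ∧ ∀ ⦃D : C⦄ (h : B ⟶ D), f ≫ h = 0 → ∃ k : X ⟶ D, h = g ≫ k

/-- `g` is a cokernel of `f`. -/
def IsCokernelOf {A B X : C} (f : A ⟶ B) (g : B ⟶ X) : Prop :=
  f ≫ g = 0 ∧ ∀ ⦃D : C⦄ (h : B ⟶ D), f ≫ h = 0 → ∃! k : X ⟶ D, h = g ≫ k

/-- `f` is a weak kernel of `g`. -/
def IsWeakKernel {A B X : C} (g : B ⟶ X) (f : A ⟶ B) : Prop :=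
  f ≫ g = 0 ∧ ∀ ⦃D : C⦄ (h : D ⟶ B), h ≫ g = 0 → ∃ k : D ⟶ A, h = k ≫ f

/-- `f` is a kernel of `g`. -/
def IsKernelOf {A B X : C} (g : B ⟶ X) (f : A ⟶ B) : Prop :=
  f ≫ g = 0 ∧ ∀ ⦃D : C⦄ (h : D ⟶ B), h ≫ g = 0 → ∃! k : D ⟶ A, h = k ≫ f

/-- The sequence `X 0 → X 1 → ⋯ → X (n+1)` is right `n`-exact, i.e.
`(d 1, …, d n)` is an `n`-cokernel of `d 0`: each `d (k+1)` with `k + 2 ≤ n` is a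
weak cokernel of `d k`, and `d n` is a cokernel of `d (n-1)`. -/
def IsRightNExactSeq (n : ℕ) (X : ℕ → C) (d : ∀ i, X i ⟶ X (i + 1)) : Prop :=
  (∀ k, k + 2 ≤ n → IsWeakCokernel (d k) (d (k + 1))) ∧ IsCokernelOf (d (n - 1)) (d (n - 1 + 1))

/-- The sequence `X 0 → X 1 → ⋯ → X (n+1)` is left `n`-exact. -/
def IsLeftNExactSeq (n : ℕ) (X : ℕ → C) (d : ∀ i, X i ⟶ X (i + 1)) : Prop :=
  (∀ k, k + 2 ≤ n → IsWeakKernel (d (k + 1)) (d k)) ∧ IsKernelOf (d 1) (d 0)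

/-- `f : A ⟶ B` is `X`-monic with respect to the subcategory given by the predicate `P`:
every morphism from `A` to an object of `P` factors through `f`. -/
def XMonic (P : C → Prop) {A B : C} (f : A ⟶ B) : Prop :=
  ∀ ⦃M : C⦄, P M → ∀ g : A ⟶ M, ∃ h : B ⟶ M, g = f ≫ h

/-- `f` is `X`-epic. -/
def XEpic (P : C → Prop) {A B : C} (f : A ⟶ B) : Prop :=
  ∀ ⦃M : C⦄, P M → ∀ g : M ⟶ B, ∃ h : M ⟶ A, g = h ≫ f

/-- `(-1)^k • f`. -/
def psign (k : ℕ) {A B : C} (f : A ⟶ B) : A ⟶ B := if Even k then f else -f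

/-- `f : A ⟶ B` has an `n`-cokernel. -/
def HasNCokernel (n : ℕ) {A B : C} (f : A ⟶ B) : Prop :=
  ∃ (X : ℕ → C) (d : ∀ i, X i ⟶ X (i + 1)) (e0 : X 0 = A) (e1 : X 1 = B),
    d 0 = eqToHom e0 ≫ f ≫ eqToHom e1.symm ∧ IsRightNExactSeq n X d

/-- `f : A ⟶ B` has a special `n`-cokernel with respect to `P`: an `n`-cokernel all of whose
intermediate objects lie in `P`. -/
def HasSpecialNCokernel (P : C → Prop) (n : ℕ) {A B : C} (f : A ⟶ B) : Prop :=
  ∃ (X : ℕ → C) (d : ∀ i, X i ⟶ X (i + 1)) (e0 : X 0 = A) (e1 : X 1 = B),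
    d 0 = eqToHom e0 ≫ f ≫ eqToHom e1.symm ∧ IsRightNExactSeq n X d ∧
    ∀ i, 2 ≤ i → i ≤ n → P (X i)

end Defs

/-- Jasso, Lemma 2.1. Let `A` and `B` be complexes concentrated in
nonnegative degrees in an additive category such that for all `i ≥ 0` the morphism
`dA (i+1)` is a weak cokernel of `dA i`.  If `f g : A ⟶ B` are morphisms of complexes
with `f 0 = g 0`, then there is a homotopy `h` between `f` and `g` with `h₀ = 0`;
here `h i : A (i+1) ⟶ B i` plays the role of the paper's `h_{i+1}`, and the
degree-zero identity `f 0 - g 0 = dA 0 ≫ h 0` expresses that the paper's `h₀` is zero. -/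
theorem homotopy_of_eq_degree_zero
    [Preadditive C] [HasZeroObject C] [HasFiniteBiproducts C]
    (A B : ℕ → C) (dA : ∀ i, A i ⟶ A (i + 1)) (dB : ∀ i, B i ⟶ B (i + 1))
    (hA : ∀ i, IsWeakCokernel (dA i) (dA (i + 1)))
    (hB : ∀ i, dB i ≫ dB (i + 1) = 0)
    (f g : ∀ i, A i ⟶ B i)
    (hf : ∀ i, dA i ≫ f (i + 1) = f i ≫ dB i)
    (hg : ∀ i, dA i ≫ g (i + 1) = g i ≫ dB i)
    (h0 : f 0 = g 0) :
    ∃ h : ∀ i, A (i + 1) ⟶ B i,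
      (f 0 - g 0 = dA 0 ≫ h 0) ∧
      (∀ i, f (i + 1) - g (i + 1) = h i ≫ dB i + dA (i + 1) ≫ h (i + 1)) := by
  -- one-step construction: given h_i satisfying the invariant, produce h_{i+1}
  have key : ∀ i (x : A (i+1) ⟶ B i),
      dA i ≫ (f (i+1) - g (i+1) - x ≫ dB i) = 0 →
      ∃ y : A (i+2) ⟶ B (i+1),
        (f (i+1) - g (i+1) - x ≫ dB i = dA (i+1) ≫ y) ∧
        dA (i+1) ≫ (f (i+2) - g (i+2) - y ≫ dB (i+1)) = 0 := by
    intro i x hx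
    obtain ⟨y, hy⟩ := (hA i).2 _ hx
    refine ⟨y, hy, ?_⟩
    have h1 : dA (i+1) ≫ (f (i+2) - g (i+2)) = (f (i+1) - g (i+1)) ≫ dB (i+1) := by
      simp [Preadditive.comp_sub, Preadditive.sub_comp, hf (i+1), hg (i+1)]
    have h2 : dA (i+1) ≫ y ≫ dB (i+1) = (f (i+1) - g (i+1) - x ≫ dB i) ≫ dB (i+1) := by
      rw [← Category.assoc, ← hy]
    rw [Preadditive.comp_sub, h1, h2]
    simp [Preadditive.sub_comp, Category.assoc, hB i]
  choose F hF1 hF2 using key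
  have base : dA 0 ≫ (f 1 - g 1 - (0 : A 1 ⟶ B 0) ≫ dB 0) = 0 := by
    have : dA 0 ≫ (f 1 - g 1) = (f 0 - g 0) ≫ dB 0 := by
      simp [Preadditive.comp_sub, Preadditive.sub_comp, hf 0, hg 0]
    simp [Preadditive.comp_sub] at this ⊢
    rw [this, h0]; simp
  let H : ∀ i, {x : A (i+1) ⟶ B i // dA i ≫ (f (i+1) - g (i+1) - x ≫ dB i) = 0} :=
    fun i => Nat.rec ⟨0, base⟩ (fun n p => ⟨F n p.1 p.2, hF2 n p.1 p.2⟩) i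
  refine ⟨fun i => (H i).1, ?_, ?_⟩
  · rw [h0]; show g 0 - g 0 = dA 0 ≫ (0 : A 1 ⟶ B 0)
    simp
  · intro i
    have hnext : (H (i+1)).1 = F i (H i).1 (H i).2 := rfl
    have := hF1 i (H i).1 (H i).2
    rw [← hnext] at this
    linear_combination (norm := abel) this
end

section
/- Given a commutative diagram in an additive category with rows the right n-exact sequences A_0 → A_1 → ⋯ → A_{n+1} and A_0 → B_1 → ⋯ → B_{n+1}, with vertical morphisms h_i : A_i → B_i for 1 ≤ i ≤ n+1 and the identity on A_0, the mapping-cone-type sequence A_1 → A_2 ⊕ B_1 → A_3 ⊕ B_2 → ⋯ → A_{n+1} ⊕ B_n → B_{n+1}, with differentials d_0 = (-f_1, h_1)^T, d_i = [[-f_{i+1}, 0],[h_{i+1}, g_i]] for 1 ≤ i ≤ n−1, and d_n = (h_{n+1}, g_n), is right n-exact; in particular the truncated diagram with columns h_1, …, h_{n+1} is an n-pushout diagram. -/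
open CategoryTheory Limits

universe v u

variable {C : Type u} [Category.{v} C]

section Cone
variable [Preadditive C] [HasBinaryBiproducts C]

/-- The middle differentials of the mapping cone of a morphism `h` of complexes `(A, f) → (B, g)`:
the matrix `[[-f_{i+1}, 0], [h_{i+1}, g_i]] : A_{i+1} ⊕ B_i ⟶ A_{i+2} ⊕ B_{i+1}`. -/
noncomputable def coneMid (A B : ℕ → C) (f : ∀ i, A i ⟶ A (i + 1)) (g : ∀ i, B i ⟶ B (i + 1))
    (h : ∀ i, A i ⟶ B i) (i : ℕ) : (A (i + 1) ⊞ B i : C) ⟶ (A (i + 2) ⊞ B (i + 1) : C) :=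
  biprod.lift (biprod.fst ≫ (-f (i + 1))) (biprod.fst ≫ h (i + 1) + biprod.snd ≫ g i)

end Cone

section Helpers
variable [Preadditive C]

theorem IsCokernelOf.isWeakCokernel {A B X : C} {f : A ⟶ B} {g : B ⟶ X}
    (h : IsCokernelOf f g) : IsWeakCokernel f g :=
  ⟨h.1, fun _ φ hφ => (h.2 φ hφ).exists⟩

/-- Cokernels are epimorphisms (as a cancellation statement). -/
theorem IsCokernelOf.cancel {A B X D : C} {f : A ⟶ B} {g : B ⟶ X}
    (h : IsCokernelOf f g) {u v : X ⟶ D} (huv : g ≫ u = g ≫ v) : u = v := by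
  have h0 : f ≫ g ≫ u = 0 := by rw [← Category.assoc, h.1, zero_comp]
  obtain ⟨k, _, hu⟩ := h.2 (g ≫ u) h0
  exact (hu u rfl).trans (hu v huv).symm

/-- In a right `n`-exact sequence, `d (k+1)` is a weak cokernel of `d k` for all `k ≤ n - 1`. -/
theorem IsRightNExactSeq.wc {n : ℕ} {X : ℕ → C} {d : ∀ i, X i ⟶ X (i + 1)}
    (hX : IsRightNExactSeq n X d) {k : ℕ} (hk : k + 1 ≤ n) :
    IsWeakCokernel (d k) (d (k + 1))  := by
  rcases lt_or_eq_of_le hk with hlt | heq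
  · exact hX.1 k hlt
  · have h2 := hX.2
    rw [show n - 1 = k by omega] at h2
    exact h2.isWeakCokernel

variable [HasBinaryBiproducts C]

theorem coneMid_inl (A B : ℕ → C) (f : ∀ i, A i ⟶ A (i + 1)) (g : ∀ i, B i ⟶ B (i + 1))
    (h : ∀ i, A i ⟶ B i) (i : ℕ) :
    biprod.inl ≫ coneMid A B f g h i = biprod.lift (-f (i + 1)) (h (i + 1)) := by
  apply biprod.hom_ext <;> simp [coneMid]

theorem coneMid_inr (A B : ℕ → C) (f : ∀ i, A i ⟶ A (i + 1)) (g : ∀ i, B i ⟶ B (i + 1))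
    (h : ∀ i, A i ⟶ B i) (i : ℕ) :
    biprod.inr ≫ coneMid A B f g h i = biprod.lift 0 (g i) := by
  apply biprod.hom_ext <;> simp [coneMid]

/-- The key factorization step for the mapping cone sequence. -/
theorem cone_factor {A B : ℕ → C} {f : ∀ i, A i ⟶ A (i + 1)} {g : ∀ i, B i ⟶ B (i + 1)}
    {h : ∀ i, A i ⟶ B i} {i : ℕ}
    (hg : IsWeakCokernel (g i) (g (i + 1))) (hf : IsWeakCokernel (f (i + 1)) (f (i + 2)))
    (hc : f (i + 1) ≫ h (i + 2) = h (i + 1) ≫ g (i + 1))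
    {D : C} {p : A (i + 2) ⟶ D} {q : B (i + 1) ⟶ D}
    (hpq : f (i + 1) ≫ p = h (i + 1) ≫ q) (hq : g i ≫ q = 0) :
    ∃ K : (A (i + 3) ⊞ B (i + 2) : C) ⟶ D,
      biprod.desc p q = coneMid A B f g h (i + 1) ≫ K := by
  obtain ⟨k₂, hk₂⟩ := hg.2 q hq
  have hψ : f (i + 1) ≫ (p - h (i + 2) ≫ k₂) = 0 := by
    rw [Preadditive.comp_sub, hpq, hk₂, ← Category.assoc, ← Category.assoc, hc, sub_self]
  obtain ⟨k₁, hk₁⟩ := hf.2 _ hψ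
  refine ⟨biprod.desc (-k₁) k₂, biprod.hom_ext' _ _ ?_ ?_⟩
  · rw [← Category.assoc, coneMid_inl, biprod.inl_desc, biprod.lift_desc]
    simp only [Preadditive.neg_comp, Preadditive.comp_neg, neg_neg]
    rw [← hk₁]
    abel
  · rw [← Category.assoc, coneMid_inr, biprod.inr_desc, biprod.lift_desc, zero_comp, zero_add,
      hk₂]

end Helpers

/-- Lemma 2.7. Given a commutative diagram of right `n`-exact sequences
`A 0 → A 1 → ⋯ → A (n+1)` and `A 0 = B 0 → B 1 → ⋯ → B (n+1)` with vertical morphisms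
`h i : A i ⟶ B i` (`h 0` the identity), the mapping-cone-type sequence
`A 1 → A 2 ⊕ B 1 → ⋯ → A (n+1) ⊕ B n → B (n+1)` with differentials
`d 0 = (-f 1, h 1)ᵀ`, `d i = [[-f (i+1), 0], [h (i+1), g i]]` and `d n = (h (n+1), g n)`
is right `n`-exact; in particular the truncated diagram is an `n`-pushout diagram. -/
theorem cone_of_right_n_exact_is_right_n_exact
    [Preadditive C] [HasZeroObject C] [HasFiniteBiproducts C] [HasBinaryBiproducts C]
    (n : ℕ) (hn : 1 ≤ n)
    (A B : ℕ → C) (f : ∀ i, A i ⟶ A (i + 1)) (g : ∀ i, B i ⟶ B (i + 1))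
    (h : ∀ i, A i ⟶ B i) (e : A 0 = B 0) (h0 : h 0 = eqToHom e)
    (hcomm : ∀ i, f i ≫ h (i + 1) = h i ≫ g i)
    (hA : IsRightNExactSeq n A f) (hB : IsRightNExactSeq n B g) :
    (n = 1 → IsCokernelOf (biprod.lift (-f 1) (h 1)) (biprod.desc (h 2) (g 1))) ∧
    (2 ≤ n →
      IsWeakCokernel (biprod.lift (-f 1) (h 1)) (coneMid A B f g h 1) ∧
      (∀ i, 1 ≤ i → i + 2 ≤ n → IsWeakCokernel (coneMid A B f g h i) (coneMid A B f g h (i + 1))) ∧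
      IsCokernelOf (coneMid A B f g h (n - 1)) (biprod.desc (h (n - 1 + 2)) (g (n - 1 + 1)))) := by
  have lift_comp : ∀ {X P Q D : C} (a : X ⟶ P) (b : X ⟶ Q) (φ : (P ⊞ Q : C) ⟶ D),
      biprod.lift a b ≫ φ = a ≫ (biprod.inl ≫ φ) + b ≫ (biprod.inr ≫ φ) := by
    intro X P Q D a b φ
    rw [biprod.lift_eq, Preadditive.add_comp, Category.assoc, Category.assoc]
  have ff : ∀ k, k + 1 ≤ n → f k ≫ f (k + 1) = 0 := fun k hk => (hA.wc hk).1
  have gg : ∀ k, k + 1 ≤ n → g k ≫ g (k + 1) = 0 := fun k hk => (hB.wc hk).1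
  have hq0 : ∀ {D : C} (p : A 2 ⟶ D) (q : B 1 ⟶ D), f 1 ≫ p = h 1 ≫ q → g 0 ≫ q = 0 := by
    intro D p q hpq
    have hz : h 0 ≫ g 0 ≫ q = 0 := by
      rw [← Category.assoc, ← hcomm 0, Category.assoc, ← hpq, ← Category.assoc, ff 0 hn,
        zero_comp]
    rw [h0] at hz
    calc g 0 ≫ q = eqToHom e.symm ≫ eqToHom e ≫ g 0 ≫ q := by simp
      _ = 0 := by rw [hz, comp_zero]
  constructor
  · rintro rfl
    constructor
    · rw [biprod.lift_desc, Preadditive.neg_comp, hcomm 1, neg_add_cancel]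
    · intro D φ hφ
      have hpq : f 1 ≫ (biprod.inl ≫ φ) = h 1 ≫ (biprod.inr ≫ φ) := by
        rw [lift_comp, Preadditive.neg_comp, neg_add_eq_zero] at hφ
        exact hφ
      obtain ⟨k, hk, huniq⟩ := hB.2.2 (biprod.inr ≫ φ) (hq0 _ _ hpq)
      have hpk : biprod.inl ≫ φ = h 2 ≫ k := by
        apply hA.2.cancel
        rw [hpq, hk]
        simp only [← Category.assoc]
        rw [hcomm 1]
      refine ⟨k, ?_, ?_⟩
      · apply biprod.hom_ext'
        · rw [← Category.assoc, biprod.inl_desc, hpk]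
        · rw [← Category.assoc, biprod.inr_desc, hk]
      · intro k' hk'
        apply huniq
        rw [hk', ← Category.assoc, biprod.inr_desc]
  · intro hn2
    obtain ⟨m, rfl⟩ : ∃ m, n = m + 2 := ⟨n - 2, by omega⟩
    refine ⟨⟨?_, ?_⟩, fun i hi1 hi2 => ⟨?_, ?_⟩, ?_⟩
    · apply biprod.hom_ext <;>
        simp [coneMid, ff 1 (by omega), hcomm 1]
    · intro D φ hφ
      have hpq : f 1 ≫ (biprod.inl ≫ φ) = h 1 ≫ (biprod.inr ≫ φ) := by
        rw [lift_comp, Preadditive.neg_comp, neg_add_eq_zero] at hφ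
        exact hφ
      obtain ⟨K, hK⟩ := cone_factor (i := 0) (hB.wc (by omega)) (hA.wc (by omega)) (hcomm 1)
        hpq (hq0 _ _ hpq)
      refine ⟨K, ?_⟩
      have hφd : φ = biprod.desc (biprod.inl ≫ φ) (biprod.inr ≫ φ) := by
        apply biprod.hom_ext' <;> simp
      rw [hφd, hK]
    · apply biprod.hom_ext' <;> apply biprod.hom_ext <;>
        simp [coneMid, ff (i + 1) hi2, gg i (by omega), hcomm (i + 1)]
    · intro D φ hφ
      have h1 : biprod.lift (-f (i + 1)) (h (i + 1)) ≫ φ = 0 := by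
        rw [← coneMid_inl, Category.assoc, hφ, comp_zero]
      have h2 : biprod.lift (0 : B i ⟶ A (i + 2)) (g i) ≫ φ = 0 := by
        rw [← coneMid_inr, Category.assoc, hφ, comp_zero]
      have hpq : f (i + 1) ≫ (biprod.inl ≫ φ) = h (i + 1) ≫ (biprod.inr ≫ φ) := by
        rw [lift_comp, Preadditive.neg_comp, neg_add_eq_zero] at h1
        exact h1
      have hq : g i ≫ (biprod.inr ≫ φ) = 0 := by
        rw [lift_comp, zero_comp, zero_add] at h2
        exact h2
      obtain ⟨K, hK⟩ := cone_factor (hB.wc (by omega)) (hA.wc (by omega)) (hcomm (i + 1))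
        hpq hq
      refine ⟨K, ?_⟩
      have hφd : φ = biprod.desc (biprod.inl ≫ φ) (biprod.inr ≫ φ) := by
        apply biprod.hom_ext' <;> simp
      rw [hφd, hK]
    · show IsCokernelOf (coneMid A B f g h (m + 1)) (biprod.desc (h (m + 3)) (g (m + 2)))
      constructor
      · apply biprod.hom_ext' <;>
          simp [coneMid, hcomm (m + 2), gg (m + 1) (by omega)]
      · intro D φ hφ
        have h1 : biprod.lift (-f (m + 2)) (h (m + 2)) ≫ φ = 0 := by
          rw [← coneMid_inl, Category.assoc, hφ, comp_zero]
        have h2 : biprod.lift (0 : B (m + 1) ⟶ A (m + 3)) (g (m + 1)) ≫ φ = 0 := by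
          rw [← coneMid_inr, Category.assoc, hφ, comp_zero]
        have hpq : f (m + 2) ≫ (biprod.inl ≫ φ) = h (m + 2) ≫ (biprod.inr ≫ φ) := by
          rw [lift_comp, Preadditive.neg_comp, neg_add_eq_zero] at h1
          exact h1
        have hq : g (m + 1) ≫ (biprod.inr ≫ φ) = 0 := by
          rw [lift_comp, zero_comp, zero_add] at h2
          exact h2
        have hA2 := hA.2
        have hB2 := hB.2
        rw [show m + 2 - 1 = m + 1 by omega] at hA2 hB2
        obtain ⟨k, hk, huniq⟩ := hB2.2 (biprod.inr ≫ φ) hq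
        have hpk : biprod.inl ≫ φ = h (m + 3) ≫ k := by
          apply hA2.cancel
          rw [hpq, hk]
          simp only [← Category.assoc]
          rw [hcomm (m + 2)]
        refine ⟨k, ?_, ?_⟩
        · apply biprod.hom_ext'
          · rw [← Category.assoc, biprod.inl_desc, hpk]
          · rw [← Category.assoc, biprod.inr_desc, hk]
        · intro k' hk'
          apply huniq
          rw [hk', ← Category.assoc, biprod.inr_desc]
end

section
/- Let C be an additive category, X a covariantly finite subcategory, and A →^{f_0} A_1 →^{f_1} A_2 → ⋯ a right n-exact sequence with f_0 X-monic, together with a comparison morphism (1_A, a_1, …) to the fixed right n-exact sequence A →^{α_0} X_1 → ⋯ defining Σ A (α_0 a left X-approximation). Then the morphism (-f_1, a_1)^T : A_1 → A_2 ⊕ X_1 is X-monic. -/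
open CategoryTheory Limits

universe v u

variable {C : Type u} [Category.{v} C]

/-- Let `X` (given by the predicate `P`) be a covariantly finite subcategory,
`A 0 → A 1 → ⋯` a right `n`-exact sequence with `f 0` `X`-monic, and `(1, a 1, a 2, …)` a
comparison morphism to the fixed right `n`-exact sequence `A 0 → X 1 → ⋯ → X n → Σ A 0`
(whose first map `α 0` is a left `X`-approximation).  Then
`(-f 1, a 1)ᵀ : A 1 ⟶ A 2 ⊞ X 1` is `X`-monic. -/
theorem neg_f1_a1_XMonic
    [Preadditive C] [HasZeroObject C] [HasFiniteBiproducts C] [HasBinaryBiproducts C]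
    (P : C → Prop) (n : ℕ) (hn : 1 ≤ n)
    (A : ℕ → C) (f : ∀ i, A i ⟶ A (i + 1))
    (hA : IsRightNExactSeq n A f) (hf0 : XMonic P (f 0))
    -- the fixed sequence `A 0 → X 1 → ⋯ → X n → Σ (A 0)` defining `Σ (A 0)`
    (X : ℕ → C) (α : ∀ i, X i ⟶ X (i + 1)) (e0 : X 0 = A 0)
    (hX : IsRightNExactSeq n X α)
    (hXP : ∀ i, 1 ≤ i → i ≤ n → P (X i))
    (hα : XMonic P (α 0))
    -- the comparison morphism, with `a 0` the identity of `A 0`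
    (a : ∀ i, A i ⟶ X i) (ha0 : a 0 = eqToHom e0.symm)
    (ha : ∀ i, f i ≫ a (i + 1) = a i ≫ α i) :
    XMonic P (biprod.lift (-f 1) (a 1)) := by
  intro M hM g
  -- factor `eqToHom e0 ≫ f 0 ≫ g` through `α 0` using that `α 0` is `X`-monic
  obtain ⟨h1, hh1⟩ := hα hM (eqToHom e0 ≫ f 0 ≫ g)
  -- `f 0 ≫ (g - a 1 ≫ h1) = 0`
  have hz : f 0 ≫ (g - a 1 ≫ h1) = 0 := by
    rw [Preadditive.comp_sub]
    have : f 0 ≫ a 1 ≫ h1 = a 0 ≫ α 0 ≫ h1 := by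
      rw [← Category.assoc, ha 0, Category.assoc]
    rw [this, ← hh1, ha0]
    simp
  -- `f 1` is a weak cokernel of `f 0`
  have hwc : ∀ ⦃D : C⦄ (h : A 1 ⟶ D), f 0 ≫ h = 0 → ∃ k : A 2 ⟶ D, h = f 1 ≫ k := by
    rcases Nat.lt_or_ge n 2 with h2 | h2
    · have hn1 : n = 1 := by omega
      intro D h hh
      obtain ⟨k, hk, -⟩ := (hn1 ▸ hA.2).2 h hh
      exact ⟨k, hk⟩
    · intro D h hh
      exact (hA.1 0 (by omega)).2 h hh
  obtain ⟨k, hk⟩ := hwc (g - a 1 ≫ h1) hz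
  refine ⟨biprod.desc (-k) h1, ?_⟩

  simp only [biprod.lift_desc, Preadditive.neg_comp, Preadditive.comp_neg, neg_neg]
  have := sub_eq_iff_eq_add.mp hk
  rw [this]
end

section
/- Let C be an additive category and X a subcategory. If f_0 : A_0 → A_1 and φ_1 : A_1 → B_1 are both X-monic, and A_0 →^{φ_1 f_0} B_1 →^{g_1} B_2 → ⋯ and A_0 →^{f_0} A_1 →^{f_1} A_2 → ⋯ are right n-exact sequences connected by a morphism of complexes (1, φ_1, φ_2, …), then the morphism (f_2, φ_2)^T : A_2 → A_3 ⊕ B_2 is X-monic. -/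
open CategoryTheory Limits

universe v u

variable {C : Type u} [Category.{v} C]

/-! A diagram chase. Given `h : A 2 ⟶ M` with `M` in `X`, `X`-monicity of `φ 1` gives
`f 1 ≫ h = φ 1 ≫ u`; then `u` kills `g 0 = f 0 ≫ φ 1`, so `u = g 1 ≫ v`, and `h - φ 2 ≫ v`
kills `f 1`, so it equals `f 2 ≫ w`. Hence `h = f 2 ≫ w + φ 2 ≫ v`. -/

section

variable [Preadditive C]

theorem IsCokernelOf.epi {A B X : C} {f : A ⟶ B} {g : B ⟶ X} (h : IsCokernelOf f g) :
    Epi g where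
  left_cancellation x y hxy := by
    obtain ⟨k, -, hk⟩ := h.2 (g ≫ x) (by rw [← Category.assoc, h.1, zero_comp])
    exact (hk x rfl).trans (hk y hxy).symm

namespace IsRightNExactSeq

variable {n : ℕ} {X : ℕ → C} {d : ∀ i, X i ⟶ X (i + 1)}

theorem isWeakCokernel (h : IsRightNExactSeq n X d) {k : ℕ} (hk : k + 1 ≤ n) :
    IsWeakCokernel (d k) (d (k + 1)) := by
  rcases hk.lt_or_eq with hlt | rfl
  · exact h.1 k hlt
  · exact h.2.isWeakCokernel

theorem epi (h : IsRightNExactSeq n X d) (hn : 1 ≤ n) : Epi (d n) := by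
  obtain ⟨m, rfl⟩ := Nat.exists_eq_add_of_le' hn
  exact h.2.epi

/-- At the last step `k = n` this holds because `d n` is epi. -/
theorem exists_eq_comp_of_comp_eq_zero (h : IsRightNExactSeq n X d) (hn : 1 ≤ n) {k : ℕ}
    (hk : k ≤ n) {D : C} {x : X (k + 1) ⟶ D} (hx : d k ≫ x = 0) :
    ∃ w : X (k + 2) ⟶ D, x = d (k + 1) ≫ w := by
  rcases hk.lt_or_eq with hlt | rfl
  · exact (h.isWeakCokernel hlt).2 x hx
  · have := h.epi hn
    exact ⟨0, by rw [comp_zero, ← cancel_epi (d k), hx, comp_zero]⟩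

end IsRightNExactSeq

end

theorem f2_phi2_XMonic_general
    [Preadditive C] [HasBinaryBiproducts C]
    (P : C → Prop) (n : ℕ) (hn : 1 ≤ n)
    (A B : ℕ → C) (f : ∀ i, A i ⟶ A (i + 1)) (g : ∀ i, B i ⟶ B (i + 1))
    (e : B 0 = A 0)
    (φ : ∀ i, A i ⟶ B i)
    (hA : IsRightNExactSeq n A f) (hB : IsRightNExactSeq n B g)
    (hφ1 : XMonic P (φ 1))
    (hg0 : g 0 = eqToHom e ≫ f 0 ≫ φ 1)
    (hcomm : ∀ i, f i ≫ φ (i + 1) = φ i ≫ g i) :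
    XMonic P (biprod.lift (f 2) (φ 2)) := by
  intro M hM h
  obtain ⟨u, hu⟩ := hφ1 hM (f 1 ≫ h)
  have hgu : g 0 ≫ u = 0 := by
    rw [hg0, Category.assoc, Category.assoc, ← hu, ← Category.assoc (f 0),
      (hA.isWeakCokernel hn).1, zero_comp, comp_zero]
  obtain ⟨v, hv⟩ := (hB.isWeakCokernel hn).2 u hgu
  have hf1 : f 1 ≫ (h - φ 2 ≫ v) = 0 := by
    rw [Preadditive.comp_sub, ← Category.assoc, hcomm 1, Category.assoc, ← hv, ← hu, sub_self]
  obtain ⟨w, hw⟩ := hA.exists_eq_comp_of_comp_eq_zero hn hn hf1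
  exact ⟨biprod.desc w v, by rw [biprod.lift_desc, ← hw, sub_add_cancel]⟩

/-- Let `X` be a subcategory (predicate `P`).  If `f 0 : A 0 ⟶ A 1` and
`φ 1 : A 1 ⟶ B 1` are both `X`-monic, and `A 0 → A 1 → A 2 → ⋯` and
`A 0 → B 1 → B 2 → ⋯` (with first morphism `φ 1 ∘ f 0`) are right `n`-exact sequences
connected by a morphism of complexes `(1, φ 1, φ 2, …)`, then
`(f 2, φ 2)ᵀ : A 2 ⟶ A 3 ⊞ B 2` is `X`-monic. -/
theorem f2_phi2_XMonic
    [Preadditive C] [HasZeroObject C] [HasFiniteBiproducts C] [HasBinaryBiproducts C]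
    (P : C → Prop) (n : ℕ) (hn : 1 ≤ n)
    (A B : ℕ → C) (f : ∀ i, A i ⟶ A (i + 1)) (g : ∀ i, B i ⟶ B (i + 1))
    (e : B 0 = A 0)
    (φ : ∀ i, A i ⟶ B i) (hφ0 : φ 0 = eqToHom e.symm)
    (hA : IsRightNExactSeq n A f) (hB : IsRightNExactSeq n B g)
    (hf0 : XMonic P (f 0)) (hφ1 : XMonic P (φ 1))
    (hg0 : g 0 = eqToHom e ≫ f 0 ≫ φ 1)
    (hcomm : ∀ i, f i ≫ φ (i + 1) = φ i ≫ g i) :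
    XMonic P (biprod.lift (f 2) (φ 2)) :=
  f2_phi2_XMonic_general P n hn A B f g e φ hA hB hφ1 hg0 hcomm
end
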